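/- arXiv:1102.2835 — 2 statements merged into one kernel-verified Lean document; each statement's English description precedes it below -/
import Mathlib

section
/- The multi-Poisson bracket on admissible forms of an integrable multi-Dirac structure is graded anti-commutative: {Σ,Σ'} = −(-1)^{kl}{Σ',Σ} where k = |Σ|, l = |Σ'|. -/
noncomputable section

/-- An abstract model of the calculus of multivector fields and differential
forms on a smooth manifold `Z`:  `A` plays the role of the ring of smooth
functions `C^∞(Z)`, `X` the space of (inhomogeneous) multivector fields, and
`F` the space of (inhomogeneous) differential forms.  The submodules `MV k`
and `Fm k` are the multivector fields and forms of pure degree `k`; `wedge`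
is the exterior product of multivector fields, `sch` the Schouten–Nijenhuis
bracket, `iota` the contraction (interior product) of a multivector field
with a form (for decomposable `Γ = X₁ ∧ ⋯ ∧ X_k`,
`iota Γ α = i_{X_k} ⋯ i_{X_1} α`), and `d` the exterior derivative. -/
structure MultiCalc (A X F : Type) [CommRing A] [Algebra ℝ A]
    [AddCommGroup X] [AddCommGroup F] [Module ℝ X] [Module ℝ F]
    [Module A X] [Module A F] [IsScalarTower ℝ A X] [IsScalarTower ℝ A F] where
  MV : ℕ → Submodule A X
  Fm : ℕ → Submodule A F
  wedge : X → X → X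
  sch : X → X → X
  iota : X → F → F
  d : F → F
  wedge_add_left : ∀ a b c, wedge (a + b) c = wedge a c + wedge b c
  wedge_add_right : ∀ a b c, wedge a (b + c) = wedge a b + wedge a c
  wedge_smul_left : ∀ (f : A) a b, wedge (f • a) b = f • wedge a b
  wedge_smul_right : ∀ (f : A) a b, wedge a (f • b) = f • wedge a b
  iota_add_left : ∀ a b α, iota (a + b) α = iota a α + iota b α
  iota_add_right : ∀ a α β, iota a (α + β) = iota a α + iota a β
  iota_smul_left : ∀ (f : A) a α, iota (f • a) α = f • iota a α
  iota_smul_right : ∀ (f : A) a α, iota a (f • α) = f • iota a α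
  sch_add_left : ∀ a b c, sch (a + b) c = sch a c + sch b c
  sch_add_right : ∀ a b c, sch a (b + c) = sch a b + sch a c
  sch_smul_left : ∀ (c : ℝ) a b, sch (c • a) b = c • sch a b
  sch_smul_right : ∀ (c : ℝ) a b, sch a (c • b) = c • sch a b
  d_add : ∀ α β, d (α + β) = d α + d β
  d_smul : ∀ (c : ℝ) α, d (c • α) = c • d α
  d_d : ∀ α, d (d α) = 0
  wedge_mem : ∀ {r s : ℕ} {a b}, a ∈ MV r → b ∈ MV s → wedge a b ∈ MV (r + s)
  sch_mem : ∀ {r s : ℕ} {a b}, a ∈ MV r → b ∈ MV s → sch a b ∈ MV (r + s - 1)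
  iota_mem : ∀ {r k : ℕ} {a α}, a ∈ MV r → α ∈ Fm k → iota a α ∈ Fm (k - r)
  iota_zero_of_lt : ∀ {r k : ℕ} {a α}, a ∈ MV r → α ∈ Fm k → k < r → iota a α = 0
  d_mem : ∀ {k : ℕ} {α}, α ∈ Fm k → d α ∈ Fm (k + 1)
  /-- `i_{Γ ∧ Γ'} = i_{Γ'} ∘ i_Γ` -/
  iota_wedge : ∀ {r s : ℕ} {a b}, a ∈ MV r → b ∈ MV s →
    ∀ α, iota (wedge a b) α = iota b (iota a α)
  /-- graded commutativity of contractions -/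
  iota_comm : ∀ {r s : ℕ} {a b}, a ∈ MV r → b ∈ MV s →
    ∀ α, iota a (iota b α) = ((-1:ℝ)^(r*s)) • iota b (iota a α)
  /-- the Koszul identity `i_{[Γ,Γ']} α = (-1)^{(k-1)l} £_Γ i_{Γ'} α − i_{Γ'} £_Γ α`,
  written out using `£_Γ α = d i_Γ α − (-1)^k i_Γ dα`. -/
  koszul : ∀ {k l : ℕ} {a b}, a ∈ MV k → b ∈ MV l → ∀ α,
    iota (sch a b) α =
      ((-1:ℝ)^((k-1)*l)) •
        (d (iota a (iota b α)) - ((-1:ℝ)^k) • iota a (d (iota b α)))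
      - iota b (d (iota a α) - ((-1:ℝ)^k) • iota a (d α))
  /-- graded anticommutativity of the Schouten–Nijenhuis bracket -/
  sch_comm : ∀ {k l : ℕ} {a b}, a ∈ MV k → b ∈ MV l →
    sch a b = -(((-1:ℝ)^((k-1)*(l-1))) • sch b a)
  /-- graded Leibniz rule for the Schouten–Nijenhuis bracket -/
  sch_leibniz : ∀ {k l m : ℕ} {a b c}, a ∈ MV k → b ∈ MV l → c ∈ MV m →
    sch a (wedge b c) = wedge (sch a b) c + ((-1:ℝ)^((k-1)*l)) • wedge b (sch a c)
  /-- graded Jacobi identity for the Schouten–Nijenhuis bracket -/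
  sch_jacobi : ∀ {k l m : ℕ} {a b c}, a ∈ MV k → b ∈ MV l → c ∈ MV m →
    ((-1:ℝ)^((k-1)*(m-1))) • sch a (sch b c)
      + ((-1:ℝ)^((l-1)*(k-1))) • sch b (sch c a)
      + ((-1:ℝ)^((m-1)*(l-1))) • sch c (sch a b) = 0
  /-- contraction is a nondegenerate pairing of multivector fields with forms -/
  iota_nondeg : ∀ {k r : ℕ} {α}, α ∈ Fm k → 1 ≤ r → r ≤ k →
    (∀ a ∈ MV r, iota a α = 0) → α = 0

namespace MultiCalc

variable {A X F : Type} [CommRing A] [Algebra ℝ A]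
  [AddCommGroup X] [AddCommGroup F] [Module ℝ X] [Module ℝ F]
  [Module A X] [Module A F] [IsScalarTower ℝ A X] [IsScalarTower ℝ A F]
variable (C : MultiCalc A X F)

/-- generalized Lie derivative along a multivector field of degree `k`:
`£_Γ α = d i_Γ α − (-1)^k i_Γ dα` -/
def lie (k : ℕ) (a : X) (α : F) : F :=
  C.d (C.iota a α) - ((-1:ℝ)^k) • C.iota a (C.d α)

/-- graded symmetric pairing `⟨⟨·,·⟩⟩₊` on `L_r × L_s` -/
def pairPlus (r s : ℕ) (p q : X × F) : F :=
  (1/2 : ℝ) • (C.iota q.1 p.2 + ((-1:ℝ)^(r*s)) • C.iota p.1 q.2)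

/-- graded antisymmetric pairing `⟨⟨·,·⟩⟩₋` on `L_r × L_s` -/
def pairMinus (r s : ℕ) (p q : X × F) : F :=
  (1/2 : ℝ) • (C.iota q.1 p.2 - ((-1:ℝ)^(r*s)) • C.iota p.1 q.2)

/-- the multi-Courant bracket on sections of `L_r × L_s` -/
def courant (r s : ℕ) (p q : X × F) : X × F :=
  (C.sch p.1 q.1,
    ((-1:ℝ)^((r-1)*s)) • C.lie r p.1 q.2 + ((-1:ℝ)^s) • C.lie s q.1 p.2
      - ((-1:ℝ)^s) • C.d (C.pairPlus r s p q))

/-- the graded wedge product of sections of `L_r × L_s` -/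
def wedgeP (r s : ℕ) (p q : X × F) : X × F :=
  (C.wedge p.1 q.1, C.pairPlus r s p q)

/-- `L_r = ⋀^r(TZ) ×_Z ⋀^{n+1-r}(T^*Z)` -/
def Lset (n r : ℕ) : Set (X × F) := {p | p.1 ∈ C.MV r ∧ p.2 ∈ C.Fm (n + 1 - r)}

/-- the `s`-orthogonal complement of `V ⊆ L_r` with respect to `⟨⟨·,·⟩⟩₋` -/
def orthC (n r : ℕ) (V : Set (X × F)) (s : ℕ) : Set (X × F) :=
  {q ∈ C.Lset n s | ∀ p ∈ V, C.pairMinus r s p q = 0}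

/-- a multi-Dirac structure of degree `n`: subbundles `D r ⊆ L_r` that are
maximally isotropic, i.e. `(D r)^{⊥,s} = D s` whenever `r + s ≤ n + 1` -/
structure IsMultiDirac (n : ℕ) (D : ℕ → Set (X × F)) : Prop where
  subset : ∀ r, 1 ≤ r → r ≤ n → D r ⊆ C.Lset n r
  orth : ∀ r s, 1 ≤ r → 1 ≤ s → r + s ≤ n + 1 → C.orthC n r (D r) s = D s

/-- integrability: sections of `D` are closed under the multi-Courant bracket -/
def Integrable (n : ℕ) (D : ℕ → Set (X × F)) : Prop :=
  ∀ r s, 1 ≤ r → 1 ≤ s → r + s ≤ n + 1 →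
    ∀ p ∈ D r, ∀ q ∈ D s, C.courant r s p q ∈ D (r + s - 1)

/-- the integrability tensor `T_D = 2 ⟨⟨·, [[·,·]]⟩⟩₋` -/
def TD (r s t : ℕ) (p q w : X × F) : F :=
  (2:ℝ) • C.pairMinus r (s + t - 1) p (C.courant s t q w)

/-- the Jacobiator of the multi-Courant bracket -/
def jacobiator (r s t : ℕ) (p q w : X × F) : X × F :=
  C.courant r (s + t - 1) p (C.courant s t q w)
    + ((-1:ℝ)^((t-1)*(r+s))) • C.courant t (r + s - 1) w (C.courant r s p q)
    + ((-1:ℝ)^((r-1)*(s+t))) • C.courant s (t + r - 1) q (C.courant t r w p)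

/-- the gauge transformation `Φ_σ (Γ, Σ) = (Γ, Σ + i_Γ σ)` -/
def gauge (σ : F) (p : X × F) : X × F := (p.1, p.2 + C.iota p.1 σ)

/-- the graph `{(Γ, i_Γ Ω)}` of a differential form `Ω` -/
def graphD (Ω : F) (r : ℕ) : Set (X × F) := {p | p.1 ∈ C.MV r ∧ p.2 = C.iota p.1 Ω}

/-- the multi-Poisson bracket `{Σ, Σ'} = −(-1)^{|Σ|} i_{Γ_{Σ'}} dΣ`, written as a
function of the degree `k = |Σ|`, the form `Σ`, and a multivector field
`Γ_{Σ'}` associated with `Σ'` -/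
def pb (k : ℕ) (α : F) (g : X) : F := -(((-1:ℝ)^k) • C.iota g (C.d α))

/-- an `(n-r)`-form `Σ` is admissible if `(Γ_Σ, dΣ) ∈ D_r` for some
`r`-multivector field `Γ_Σ` -/
def Admissible (n : ℕ) (D : ℕ → Set (X × F)) (r : ℕ) (α : F) : Prop :=
  α ∈ C.Fm (n - r) ∧ ∃ g ∈ C.MV r, (g, C.d α) ∈ D r

/-- the form `Ω_D(v_1, …, v_n) := α_n(v_1, …, v_{n-1})` associated with `D_1`,
for sections `(v_i, α_i)` of `D_1` and `n = m + 1` -/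
def OmD (m : ℕ) (p : Fin (m+1) → X × F) : F :=
  (List.ofFn fun i : Fin m => (p i.castSucc).1).foldl
    (fun β v => C.iota v β) (p (Fin.last m)).2

end MultiCalc

theorem neg_one_pow_mul_neg_one_pow_succ_mul_succ {R : Type*} [Monoid R] [HasDistribNeg R]
    (k l : ℕ) : (-1:R)^k * (-1)^((k+1)*(l+1)) = -((-1)^(k*l) * (-1)^l) := by
  rw [← pow_add, ← pow_add, show k + (k+1)*(l+1) = 2*k + (k*l + l) + 1 by ring,
    pow_succ, pow_add, pow_mul]
  simp

namespace MultiCalc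

variable {A X F : Type} [CommRing A] [Algebra ℝ A]
  [AddCommGroup X] [AddCommGroup F] [Module ℝ X] [Module ℝ F]
  [Module A X] [Module A F] [IsScalarTower ℝ A X] [IsScalarTower ℝ A F]

theorem IsMultiDirac.pairMinus_eq_zero {C : MultiCalc A X F} {n : ℕ} {D : ℕ → Set (X × F)}
    (hD : C.IsMultiDirac n D) {r s : ℕ} (hr : 1 ≤ r) (hs : 1 ≤ s) (hrs : r + s ≤ n + 1)
    {p q : X × F} (hp : p ∈ D r) (hq : q ∈ D s) : C.pairMinus r s p q = 0 := by
  rw [← hD.orth r s hr hs hrs] at hq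
  exact hq.2 p hp

variable (C : MultiCalc A X F)

theorem pairMinus_eq_zero_iff {r s : ℕ} {p q : X × F} :
    C.pairMinus r s p q = 0 ↔ C.iota q.1 p.2 = ((-1:ℝ)^(r*s)) • C.iota p.1 q.2 := by
  rw [pairMinus, smul_eq_zero, sub_eq_zero]
  simp

theorem pb_eq_neg_smul_pb_of_iota_eq {k l : ℕ} {α β : F} {g g' : X}
    (h : C.iota g' (C.d α) = ((-1:ℝ)^((k+1)*(l+1))) • C.iota g (C.d β)) :
    C.pb k α g' = -(((-1:ℝ)^(k*l)) • C.pb l β g) := by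
  simp only [pb, h, smul_smul, smul_neg, neg_neg, neg_one_pow_mul_neg_one_pow_succ_mul_succ,
    neg_smul]

end MultiCalc

theorem pb_antisymmetric_general {A X F : Type} [CommRing A] [Algebra ℝ A]
    [AddCommGroup X] [AddCommGroup F] [Module ℝ X] [Module ℝ F]
    [Module A X] [Module A F] [IsScalarTower ℝ A X] [IsScalarTower ℝ A F]
    (C : MultiCalc A X F)
    (n : ℕ) (D : ℕ → Set (X × F)) (hD : C.IsMultiDirac n D)
    (r s : ℕ) (hr : 1 ≤ r) (hs : 1 ≤ s) (hrs : r + s ≤ n + 1)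
    (α : F) (g : X)
    (hgD : (g, C.d α) ∈ D r)
    (β : F) (g' : X)
    (hg'D : (g', C.d β) ∈ D s) :
    C.pb (r - 1) α g' = -(((-1:ℝ)^((r-1)*(s-1))) • C.pb (s - 1) β g) := by
  have hiso := (C.pairMinus_eq_zero_iff).1 (hD.pairMinus_eq_zero hr hs hrs hgD hg'D)
  obtain ⟨k, rfl⟩ := Nat.exists_eq_add_of_le' hr
  obtain ⟨l, rfl⟩ := Nat.exists_eq_add_of_le' hs
  exact C.pb_eq_neg_smul_pb_of_iota_eq hiso

/-- The multi-Poisson bracket on admissible forms is graded anticommutative: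
`{Σ,Σ'} = −(-1)^{kl} {Σ',Σ}` with `k = |Σ|`, `l = |Σ'|`. -/
theorem pb_antisymmetric {A X F : Type} [CommRing A] [Algebra ℝ A]
    [AddCommGroup X] [AddCommGroup F] [Module ℝ X] [Module ℝ F]
    [Module A X] [Module A F] [IsScalarTower ℝ A X] [IsScalarTower ℝ A F]
    (C : MultiCalc A X F)
    (n : ℕ) (D : ℕ → Set (X × F)) (hD : C.IsMultiDirac n D)
    (hInt : C.Integrable n D)
    (r s : ℕ) (hr : 1 ≤ r) (hs : 1 ≤ s) (hrs : r + s ≤ n + 1)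
    (α : F) (hα : α ∈ C.Fm (n - r)) (g : X) (hg : g ∈ C.MV r)
    (hgD : (g, C.d α) ∈ D r)
    (β : F) (hβ : β ∈ C.Fm (n - s)) (g' : X) (hg' : g' ∈ C.MV s)
    (hg'D : (g', C.d β) ∈ D s) :
    C.pb (r - 1) α g' = -(((-1:ℝ)^((r-1)*(s-1))) • C.pb (s - 1) β g) :=
  pb_antisymmetric_general C n D hD r s hr hs hrs α g hgD β g' hg'D
end
end

section
/- The integrability expression T_D((Γ,Σ),(Γ',Σ'),(Γ'',Σ'')) := 2⟨⟨(Γ,Σ), [[(Γ',Σ'),(Γ'',Σ'')]]⟩⟩_- restricted to a multi-Dirac structure D is C^∞(Z)-linear (tensorial) in each of its three arguments; in particular it is graded antisymmetric under exchange of arguments up to signs determined by the degrees, e.g. T_D((Γ,Σ),(Γ'',Σ''),(Γ',Σ')) = −(-1)^{(s-1)(t-1)} T_D((Γ,Σ),(Γ',Σ'),(Γ'',Σ'')). -/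
noncomputable section

/-!
On a multi-Dirac structure, isotropy `i_{Γ'} Σ = (-1)^{rs} i_Γ Σ'` and the Koszul formula
rewrite `T_D(p, q, w)` as a signed sum of seven terms built from contractions and `d` alone.
Comparing these normal forms shows that, up to signs, `T_D` is invariant under cyclic
permutations and antisymmetric in its last two arguments. Since `⟨⟨·,·⟩⟩₋` is `C^∞(Z)`-linear,
so is `T_D` in its first argument, and the symmetries carry this over to the other two
arguments; they apply to `f • q` because each `D_s`, being an orthogonal complement, is a
`C^∞(Z)`-submodule.
-/

namespace MultiCalc

variable {A X F : Type} [CommRing A] [Algebra ℝ A]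
  [AddCommGroup X] [AddCommGroup F] [Module ℝ X] [Module ℝ F]
  [Module A X] [Module A F] [IsScalarTower ℝ A X] [IsScalarTower ℝ A F]
variable (C : MultiCalc A X F)

theorem iota_real_smul_right (c : ℝ) (a : X) (α : F) : C.iota a (c • α) = c • C.iota a α := by
  rw [← algebraMap_smul A c α, C.iota_smul_right, algebraMap_smul]

theorem iota_sub_right (a : X) (α β : F) : C.iota a (α - β) = C.iota a α - C.iota a β :=
  (AddMonoidHom.mk' (C.iota a) (C.iota_add_right a)).map_sub α β

theorem pairMinus_smul_left (r s : ℕ) (f : A) (p q : X × F) :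
    C.pairMinus r s (f • p) q = f • C.pairMinus r s p q := by
  simp only [pairMinus, Prod.smul_fst, Prod.smul_snd, C.iota_smul_left, C.iota_smul_right]
  rw [smul_comm _ f, ← smul_sub, smul_comm _ f]

theorem pairMinus_smul_right (r s : ℕ) (f : A) (p q : X × F) :
    C.pairMinus r s p (f • q) = f • C.pairMinus r s p q := by
  simp only [pairMinus, Prod.smul_fst, Prod.smul_snd, C.iota_smul_left, C.iota_smul_right]
  rw [smul_comm _ f, ← smul_sub, smul_comm _ f]

theorem pairMinus_add_left (r s : ℕ) (p p' q : X × F) :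
    C.pairMinus r s (p + p') q = C.pairMinus r s p q + C.pairMinus r s p' q := by
  simp only [pairMinus, Prod.fst_add, Prod.snd_add, C.iota_add_left, C.iota_add_right]
  module

theorem pairMinus_add_right (r s : ℕ) (p q q' : X × F) :
    C.pairMinus r s p (q + q') = C.pairMinus r s p q + C.pairMinus r s p q' := by
  simp only [pairMinus, Prod.fst_add, Prod.snd_add, C.iota_add_left, C.iota_add_right]
  module

theorem courant_add_left (r s : ℕ) (p p' q : X × F) :
    C.courant r s (p + p') q = C.courant r s p q + C.courant r s p' q := by
  refine Prod.ext (C.sch_add_left _ _ _) ?_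
  simp only [courant, lie, pairPlus, Prod.fst_add, Prod.snd_add,
    C.iota_add_left, C.iota_add_right, C.d_add, C.d_smul]
  module

theorem courant_add_right (r s : ℕ) (p q q' : X × F) :
    C.courant r s p (q + q') = C.courant r s p q + C.courant r s p q' := by
  refine Prod.ext (C.sch_add_right _ _ _) ?_
  simp only [courant, lie, pairPlus, Prod.fst_add, Prod.snd_add,
    C.iota_add_left, C.iota_add_right, C.d_add, C.d_smul]
  module

theorem TD_smul_left (r s t : ℕ) (f : A) (p q w : X × F) :
    C.TD r s t (f • p) q w = f • C.TD r s t p q w := by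
  rw [TD, TD, C.pairMinus_smul_left, smul_comm]

theorem TD_add_left (r s t : ℕ) (p p' q w : X × F) :
    C.TD r s t (p + p') q w = C.TD r s t p q w + C.TD r s t p' q w := by
  rw [TD, C.pairMinus_add_left, smul_add, TD, TD]

theorem TD_add_middle (r s t : ℕ) (p q q' w : X × F) :
    C.TD r s t p (q + q') w = C.TD r s t p q w + C.TD r s t p q' w := by
  rw [TD, C.courant_add_left, C.pairMinus_add_right, smul_add, TD, TD]

theorem TD_add_right (r s t : ℕ) (p q w w' : X × F) :
    C.TD r s t p q (w + w') = C.TD r s t p q w + C.TD r s t p q w' := by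
  rw [TD, C.courant_add_right, C.pairMinus_add_right, smul_add, TD, TD]

-- Degrees are written `r + 1` so that the exponents `(r - 1) * s` of `courant` never truncate.
theorem TD_eq_normalForm (r s t : ℕ) (p q w : X × F)
    (ha : p.1 ∈ C.MV (r+1)) (hb : q.1 ∈ C.MV (s+1)) (hc : w.1 ∈ C.MV (t+1))
    (hqw : C.iota w.1 q.2 = ((-1:ℝ)^((s+1)*(t+1))) • C.iota q.1 w.2)
    (hpq : C.iota q.1 p.2 = ((-1:ℝ)^((r+1)*(s+1))) • C.iota p.1 q.2)
    (hpw : C.iota w.1 p.2 = ((-1:ℝ)^((r+1)*(t+1))) • C.iota p.1 w.2) :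
    C.TD (r+1) (s+1) (t+1) p q w =
      ((-1:ℝ)^(r*s+r*t+s*t+t)) • C.d (C.iota p.1 (C.iota q.1 w.2))
    + ((-1:ℝ)^(r+r*s+r*t+s*t+t)) • C.iota p.1 (C.d (C.iota q.1 w.2))
    + ((-1:ℝ)^(r+r*s+r*t+s+s*t+t)) • C.iota p.1 (C.iota q.1 (C.d w.2))
    - ((-1:ℝ)^(r+r*s+r*t+s+t)) • C.iota p.1 (C.iota w.1 (C.d q.2))
    - ((-1:ℝ)^(r+r*t+s*t+t)) • C.iota q.1 (C.d (C.iota p.1 w.2))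
    + ((-1:ℝ)^(s*t+t)) • C.iota q.1 (C.iota w.1 (C.d p.2))
    + ((-1:ℝ)^(r+r*s+s)) • C.iota w.1 (C.d (C.iota p.1 q.2)) := by
  simp only [TD, courant, pairMinus, pairPlus, lie, Nat.add_sub_cancel,
    show s + 1 + (t + 1) - 1 = s + t + 1 by omega]
  rw [C.koszul hb hc p.2, hqw, hpq, hpw]
  simp only [Nat.add_sub_cancel, C.iota_real_smul_right, C.iota_add_right, C.iota_sub_right,
    C.d_add, C.d_smul, smul_add, smul_sub, smul_smul]
  rw [C.iota_comm hc hb (C.d p.2), C.iota_comm hb ha w.2]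
  simp only [C.d_smul, smul_smul]
  match_scalars <;>
  rcases neg_one_pow_eq_or ℝ r with hr | hr <;>
  rcases neg_one_pow_eq_or ℝ s with hs | hs <;>
  rcases neg_one_pow_eq_or ℝ t with ht | ht <;>
  norm_num [pow_add, pow_mul, hr, hs, ht]

namespace IsMultiDirac

variable {C} {n : ℕ} {D : ℕ → Set (X × F)}

theorem fst_mem (hD : C.IsMultiDirac n D) {r : ℕ} (hr : 1 ≤ r) (hrn : r ≤ n) {p : X × F}
    (hp : p ∈ D r) : p.1 ∈ C.MV r :=
  (hD.subset r hr hrn hp).1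

theorem iota_snd_eq (hD : C.IsMultiDirac n D) {r s : ℕ} (hr : 1 ≤ r) (hs : 1 ≤ s)
    (hrs : r + s ≤ n + 1) {p q : X × F} (hp : p ∈ D r) (hq : q ∈ D s) :
    C.iota q.1 p.2 = ((-1:ℝ)^(r*s)) • C.iota p.1 q.2 := by
  rw [← hD.orth r s hr hs hrs] at hq
  have hpq := hq.2 p hp
  rw [pairMinus, smul_eq_zero] at hpq
  exact sub_eq_zero.mp (hpq.resolve_left (by norm_num))

theorem smul_mem (hD : C.IsMultiDirac n D) {s : ℕ} (hs : 1 ≤ s) (hsn : s ≤ n) (f : A)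
    {q : X × F} (hq : q ∈ D s) : f • q ∈ D s := by
  rw [← hD.orth 1 s le_rfl hs (by omega)] at hq ⊢
  obtain ⟨⟨hq₁, hq₂⟩, hq_orth⟩ := hq
  exact ⟨⟨Submodule.smul_mem _ f hq₁, Submodule.smul_mem _ f hq₂⟩,
    fun p hp => by rw [C.pairMinus_smul_right, hq_orth p hp, smul_zero]⟩

theorem TD_cyclic (hD : C.IsMultiDirac n D) {r s t : ℕ} (hrs : (r+1) + (s+1) ≤ n + 1)
    (hst : (s+1) + (t+1) ≤ n + 1) (hrt : (r+1) + (t+1) ≤ n + 1) {p q w : X × F}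
    (hp : p ∈ D (r+1)) (hq : q ∈ D (s+1)) (hw : w ∈ D (t+1)) :
    C.TD (r+1) (s+1) (t+1) p q w = ((-1:ℝ)^(r+r*s+r*t+s)) • C.TD (s+1) (t+1) (r+1) q w p := by
  have ha := hD.fst_mem (by omega) (by omega) hp
  have hb := hD.fst_mem (by omega) (by omega) hq
  have hc := hD.fst_mem (by omega) (by omega) hw
  have hpq := hD.iota_snd_eq (by omega) (by omega) hrs hp hq
  have hpw := hD.iota_snd_eq (by omega) (by omega) hrt hp hw
  have hqw := hD.iota_snd_eq (by omega) (by omega) hst hq hw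
  rw [C.TD_eq_normalForm r s t p q w ha hb hc hqw hpq hpw,
    C.TD_eq_normalForm s t r q w p hb hc ha
      (hD.iota_snd_eq (by omega) (by omega) (by omega) hw hp) hqw
      (hD.iota_snd_eq (by omega) (by omega) (by omega) hq hp), hpq, hpw]
  simp only [C.iota_real_smul_right, C.d_smul, smul_add, smul_sub, smul_smul]
  rw [C.iota_comm hb ha w.2, C.iota_comm hb ha (C.d w.2), C.iota_comm hc ha (C.d q.2)]
  simp only [C.d_smul, smul_smul]
  match_scalars <;>
  rcases neg_one_pow_eq_or ℝ r with hr | hr <;>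
  rcases neg_one_pow_eq_or ℝ s with hs | hs <;>
  rcases neg_one_pow_eq_or ℝ t with ht | ht <;>
  norm_num [pow_add, pow_mul, hr, hs, ht]

theorem TD_antisymm (hD : C.IsMultiDirac n D) {r s t : ℕ} (hrs : (r+1) + (s+1) ≤ n + 1)
    (hst : (s+1) + (t+1) ≤ n + 1) (hrt : (r+1) + (t+1) ≤ n + 1) {p q w : X × F}
    (hp : p ∈ D (r+1)) (hq : q ∈ D (s+1)) (hw : w ∈ D (t+1)) :
    C.TD (r+1) (t+1) (s+1) p w q = -(((-1:ℝ)^(s*t)) • C.TD (r+1) (s+1) (t+1) p q w) := by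
  have ha := hD.fst_mem (by omega) (by omega) hp
  have hb := hD.fst_mem (by omega) (by omega) hq
  have hc := hD.fst_mem (by omega) (by omega) hw
  have hpq := hD.iota_snd_eq (by omega) (by omega) hrs hp hq
  have hpw := hD.iota_snd_eq (by omega) (by omega) hrt hp hw
  have hqw := hD.iota_snd_eq (by omega) (by omega) hst hq hw
  rw [C.TD_eq_normalForm r t s p w q ha hc hb
      (hD.iota_snd_eq (by omega) (by omega) (by omega) hw hq) hpw hpq,
    C.TD_eq_normalForm r s t p q w ha hb hc hqw hpq hpw, hqw]
  simp only [C.iota_real_smul_right, C.d_smul, smul_add, smul_sub, smul_smul]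
  rw [C.iota_comm hc hb (C.d p.2)]
  simp only [smul_smul]
  match_scalars <;>
  rcases neg_one_pow_eq_or ℝ r with hr | hr <;>
  rcases neg_one_pow_eq_or ℝ s with hs | hs <;>
  rcases neg_one_pow_eq_or ℝ t with ht | ht <;>
  norm_num [pow_add, pow_mul, hr, hs, ht]

theorem TD_smul_middle (hD : C.IsMultiDirac n D) {r s t : ℕ} (hrs : (r+1) + (s+1) ≤ n + 1)
    (hst : (s+1) + (t+1) ≤ n + 1) (hrt : (r+1) + (t+1) ≤ n + 1) (f : A) {p q w : X × F}
    (hp : p ∈ D (r+1)) (hq : q ∈ D (s+1)) (hw : w ∈ D (t+1)) :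
    C.TD (r+1) (s+1) (t+1) p (f • q) w = f • C.TD (r+1) (s+1) (t+1) p q w := by
  rw [hD.TD_cyclic hrs hst hrt hp (hD.smul_mem (by omega) (by omega) f hq) hw,
    C.TD_smul_left, smul_comm, ← hD.TD_cyclic hrs hst hrt hp hq hw]

theorem TD_smul_right (hD : C.IsMultiDirac n D) {r s t : ℕ} (hrs : (r+1) + (s+1) ≤ n + 1)
    (hst : (s+1) + (t+1) ≤ n + 1) (hrt : (r+1) + (t+1) ≤ n + 1) (f : A) {p q w : X × F}
    (hp : p ∈ D (r+1)) (hq : q ∈ D (s+1)) (hw : w ∈ D (t+1)) :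
    C.TD (r+1) (s+1) (t+1) p q (f • w) = f • C.TD (r+1) (s+1) (t+1) p q w := by
  rw [hD.TD_antisymm hrt (by omega) hrs hp (hD.smul_mem (by omega) (by omega) f hw) hq,
    hD.TD_smul_middle hrt (by omega) hrs f hp hw hq, smul_comm, ← smul_neg,
    ← hD.TD_antisymm hrt (by omega) hrs hp hw hq]

end IsMultiDirac

end MultiCalc

/-- The integrability expression `T_D` restricted to a multi-Dirac structure
is `C^∞(Z)`-linear (tensorial) in each argument, and graded antisymmetric
under exchange of its arguments. -/
theorem TD_tensorial {A X F : Type} [CommRing A] [Algebra ℝ A]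
    [AddCommGroup X] [AddCommGroup F] [Module ℝ X] [Module ℝ F]
    [Module A X] [Module A F] [IsScalarTower ℝ A X] [IsScalarTower ℝ A F]
    (C : MultiCalc A X F)
    (n : ℕ) (D : ℕ → Set (X × F)) (hD : C.IsMultiDirac n D)
    (r s t : ℕ) (hr : 1 ≤ r) (hs : 1 ≤ s) (ht : 1 ≤ t)
    (hrs : r + s ≤ n + 1) (hst : s + t ≤ n + 1) (hrt : r + t ≤ n + 1)
    (p q w : X × F) (hp : p ∈ D r) (hq : q ∈ D s) (hw : w ∈ D t) (f : A) :
    C.TD r s t (f • p) q w = f • C.TD r s t p q w ∧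
      C.TD r s t p (f • q) w = f • C.TD r s t p q w ∧
      C.TD r s t p q (f • w) = f • C.TD r s t p q w ∧
      (∀ p' ∈ D r, C.TD r s t (p + p') q w = C.TD r s t p q w + C.TD r s t p' q w) ∧
      (∀ q' ∈ D s, C.TD r s t p (q + q') w = C.TD r s t p q w + C.TD r s t p q' w) ∧
      (∀ w' ∈ D t, C.TD r s t p q (w + w') = C.TD r s t p q w + C.TD r s t p q w') ∧
      C.TD r t s p w q = -(((-1:ℝ)^((s-1)*(t-1))) • C.TD r s t p q w) := by
  obtain ⟨r, rfl⟩ : ∃ k, r = k + 1 := ⟨r - 1, by omega⟩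
  obtain ⟨s, rfl⟩ : ∃ k, s = k + 1 := ⟨s - 1, by omega⟩
  obtain ⟨t, rfl⟩ : ∃ k, t = k + 1 := ⟨t - 1, by omega⟩
  refine ⟨C.TD_smul_left _ _ _ f p q w, hD.TD_smul_middle hrs hst hrt f hp hq hw,
    hD.TD_smul_right hrs hst hrt f hp hq hw, fun p' _ => C.TD_add_left _ _ _ p p' q w,
    fun q' _ => C.TD_add_middle _ _ _ p q q' w, fun w' _ => C.TD_add_right _ _ _ p q w w', ?_⟩
  simpa only [Nat.add_sub_cancel] using hD.TD_antisymm hrs hst hrt hp hq hw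
end
end
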